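/- Let M be the differential operator M(y) = (x²−1)y'' + (x − 2p(x²−1))y' + (p²(x²−1) − px − n²)y over K = ℚ(n,p). If y ∈ K(x) is a rational function such that M(y) is a polynomial in K[x], then y itself is a polynomial in K[x]. -/

import Mathlib

open Polynomial

/-- The derivative of a rational function, `(p/q)' = (p'q − pq')/q²`. -/
noncomputable def ratDeriv {K : Type*} [Field K] (f : RatFunc K) : RatFunc K :=
  (algebraMap K[X] (RatFunc K) (derivative f.num) * algebraMap K[X] (RatFunc K) f.denom -
      algebraMap K[X] (RatFunc K) f.num * algebraMap K[X] (RatFunc K) (derivative f.denom)) /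
    algebraMap K[X] (RatFunc K) (f.denom ^ 2)

/-- The action of the differential operator `M = ∑_{i=0}^r pᵢ ∂ⁱ` (with polynomial
coefficients `pᵢ`) on a rational function. -/
noncomputable def applyOp {K : Type*} [Field K] (r : ℕ) (p : ℕ → K[X]) (f : RatFunc K) :
    RatFunc K :=
  ∑ i ∈ Finset.range (r + 1), algebraMap K[X] (RatFunc K) (p i) * ratDeriv^[i] f

/-- `f` has no pole at `α`. -/
def regAt {K : Type*} [Field K] (α : K) (f : RatFunc K) : Prop :=
  Polynomial.eval α f.denom ≠ 0

/-- `ord_α f ≥ m` : the valuation of `f` at `α` (as a Laurent series in `x − α`)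
is at least `m`. -/
def ordGe {K : Type*} [Field K] (α : K) (m : ℤ) (f : RatFunc K) : Prop :=
  regAt α ((RatFunc.X - RatFunc.C α) ^ (-m) * f)

/-- `f` has degree (order at infinity, negated) at most `m`, i.e. `ord_∞ f ≥ −m`. -/
def degLe {K : Type*} [Field K] (m : ℤ) (f : RatFunc K) : Prop :=
  f = 0 ∨ RatFunc.intDegree f ≤ m

/-- The field `K = ℚ(n, p)` of rational functions in two indeterminates. -/
noncomputable abbrev Knp : Type := RatFunc (RatFunc ℚ)

/-- The indeterminate `n`. -/
noncomputable def nn : Knp := RatFunc.C RatFunc.X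

/-- The indeterminate `p`. -/
noncomputable def pp : Knp := RatFunc.X

/-- Coefficients of the operator
`M(y) = (x²−1)y'' + (x − 2p(x²−1))y' + (p²(x²−1) − px − n²)y`. -/
noncomputable def MnpCoeff : ℕ → Knp[X]
  | 0 => C (pp ^ 2) * (X ^ 2 - 1) - C pp * X - C (nn ^ 2)
  | 1 => X - C (2 * pp) * (X ^ 2 - 1)
  | 2 => X ^ 2 - 1
  | _ => 0

/-! If an irreducible `r` divides the denominator of `y` with multiplicity `k + 1`, then `y'` and
`y''` have poles of order `k + 2` and `k + 3` along `r`, with leading numerators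
`-(k + 1) r' a u` and `(k + 1) (k + 2) r'² a u³` (where `y = a / (r^(k+1) u)`). The pole of
`(x² − 1) y''` can only be cancelled if `r ∣ x² − 1`, i.e. `r ~ x ∓ 1`. At `α = ±1` the next
order gives the indicial equation `2α ρ (ρ − 1) + α ρ = 0` of `M`, whose roots `0, 1/2` are not
the negative integer `-(k + 1)`. -/

section

variable {K : Type*} [Field K]

local notation "φ" => algebraMap K[X] (RatFunc K)

theorem Polynomial.derivative_pow_mul_self {R : Type*} [CommSemiring R] (r : R[X]) (m : ℕ) :
    derivative (r ^ m) * r = m * r ^ m * derivative r := by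
  cases m with
  | zero => simp
  | succ k =>
    rw [derivative_pow_succ, ← C_eq_natCast, Nat.cast_succ]
    ring

theorem Irreducible.not_dvd_derivative [CharZero K] {r : K[X]} (hr : Irreducible r) :
    ¬ r ∣ derivative r := by
  rw [dvd_derivative_iff, derivative_eq_zero]
  exact hr.natDegree_pos.ne'

theorem Irreducible.not_dvd_natCast [CharZero K] {r : K[X]} (hr : Irreducible r) {m : ℕ}
    (hm : m ≠ 0) : ¬ r ∣ (m : K[X]) :=
  hr.not_dvd_isUnit (by rw [← C_eq_natCast]; exact isUnit_C.mpr (Nat.cast_ne_zero.mpr hm).isUnit)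

theorem ratDeriv_algebraMap_div (a b : K[X]) (hb : b ≠ 0) :
    ratDeriv (φ a / φ b) = φ (derivative a * b - a * derivative b) / φ (b ^ 2) := by
  have hinj : Function.Injective φ := RatFunc.algebraMap_injective K
  set f : RatFunc K := φ a / φ b
  have hbφ : φ b ≠ 0 := (map_ne_zero_iff _ hinj).mpr hb
  have hdφ : φ f.denom ≠ 0 := (map_ne_zero_iff _ hinj).mpr f.denom_ne_zero
  have hf : a * f.denom = f.num * b := by
    apply hinj
    rw [map_mul, map_mul, ← div_eq_div_iff hbφ hdφ, f.num_div_denom]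
  have hf' := congrArg derivative hf
  simp only [derivative_mul] at hf'
  rw [ratDeriv, map_pow, map_pow, div_eq_div_iff (pow_ne_zero 2 hdφ) (pow_ne_zero 2 hbφ)]
  simp only [← map_mul, ← map_sub, ← map_pow]
  congr 1
  linear_combination (-(b * f.denom)) * hf' + (derivative b * f.denom + b * derivative f.denom) * hf

theorem ratDeriv_div_pow_mul (a r u : K[X]) (m : ℕ) (hr : r ≠ 0) (hu : u ≠ 0) :
    ratDeriv (φ a / φ (r ^ m * u)) =
      φ (r * (derivative a * u - a * derivative u) - m * derivative r * a * u) /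
        φ (r ^ (m + 1) * u ^ 2) := by
  have hinj : Function.Injective φ := RatFunc.algebraMap_injective K
  have hb : r ^ m * u ≠ 0 := mul_ne_zero (pow_ne_zero m hr) hu
  have hb' : r ^ (m + 1) * u ^ 2 ≠ 0 := mul_ne_zero (pow_ne_zero _ hr) (pow_ne_zero 2 hu)
  rw [ratDeriv_algebraMap_div _ _ hb,
    div_eq_div_iff ((map_ne_zero_iff _ hinj).mpr (pow_ne_zero 2 hb)) ((map_ne_zero_iff _ hinj).mpr hb'),
    ← map_mul, ← map_mul]
  congr 1
  simp only [derivative_mul]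
  linear_combination (-a * u ^ 3 * r ^ m) * derivative_pow_mul_self r m

theorem applyOp_two (p : ℕ → K[X]) (f : RatFunc K) :
    applyOp 2 p f = φ (p 0) * f + φ (p 1) * ratDeriv f + φ (p 2) * ratDeriv (ratDeriv f) := by
  simp [applyOp, Finset.sum_range_succ]

theorem not_dvd_pole_numerator [CharZero K] {a r u : K[X]} (hr : Irreducible r) (ha : ¬ r ∣ a)
    (hu : ¬ r ∣ u) {m : ℕ} (hm : m ≠ 0) :
    ¬ r ∣ r * (derivative a * u - a * derivative u) - m * derivative r * a * u := by
  rw [dvd_sub_right (dvd_mul_right _ _)]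
  simp only [hr.prime.dvd_mul, hr.not_dvd_natCast hm, hr.not_dvd_derivative, ha, hu, or_self,
    not_false_eq_true]

/-- Here `y = a / (r ^ (k + 1) * u)`, `y' = c / (r ^ (k + 2) * u ^ 2)` and
`y'' = (r * w - (k + 2) * r' * c) / (r ^ (k + 3) * u ^ 4)`. -/
theorem exists_leading_terms_of_dvd_denom [CharZero K] {p : ℕ → K[X]} {y : RatFunc K} {q r : K[X]}
    (hq : applyOp 2 p y = φ q) (hr : Irreducible r) (hry : r ∣ y.denom) :
    ∃ (k : ℕ) (c w : K[X]), ¬ r ∣ c ∧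
      r ^ 2 ∣ p 2 * (r * w - ((k + 2 : ℕ) : K[X]) * derivative r * c) + r * p 1 * c := by
  have hinj : Function.Injective φ := RatFunc.algebraMap_injective K
  obtain ⟨m, u, hu, hb⟩ := WfDvdMonoid.max_power_factor y.denom_ne_zero hr
  obtain ⟨k, rfl⟩ : ∃ k, m = k + 1 := by
    refine Nat.exists_eq_add_one.mpr (Nat.pos_of_ne_zero ?_)
    rintro rfl
    exact hu (by simpa [hb] using hry)
  have hr0 : r ≠ 0 := hr.ne_zero
  have hu0 : u ≠ 0 := by rintro rfl; exact hu (dvd_zero r)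
  set a := y.num
  set c := r * (derivative a * u - a * derivative u) - ((k + 1 : ℕ) : K[X]) * derivative r * a * u
  set d := r * (derivative c * u ^ 2 - c * derivative (u ^ 2)) -
    ((k + 2 : ℕ) : K[X]) * derivative r * c * u ^ 2 with hd
  have hy : y = φ a / φ (r ^ (k + 1) * u) := hb ▸ y.num_div_denom.symm
  have hy' : ratDeriv y = φ c / φ (r ^ (k + 2) * u ^ 2) := by
    rw [hy, ratDeriv_div_pow_mul _ _ _ _ hr0 hu0]
  have hy'' : ratDeriv (ratDeriv y) = φ d / φ (r ^ (k + 3) * (u ^ 2) ^ 2) := by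
    rw [hy', ratDeriv_div_pow_mul _ _ _ _ hr0 (pow_ne_zero 2 hu0)]
  have key :
      p 2 * d + r * p 1 * (c * u ^ 2) + r ^ 2 * p 0 * a * u ^ 3 = r ^ (k + 3) * q * u ^ 4 := by
    rw [applyOp_two, hy'', hy', hy] at hq
    have hrφ : φ r ≠ 0 := (map_ne_zero_iff _ hinj).mpr hr0
    have huφ : φ u ≠ 0 := (map_ne_zero_iff _ hinj).mpr hu0
    apply hinj
    calc _ = (φ (p 0) * (φ a / φ (r ^ (k + 1) * u)) + φ (p 1) * (φ c / φ (r ^ (k + 2) * u ^ 2)) +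
          φ (p 2) * (φ d / φ (r ^ (k + 3) * (u ^ 2) ^ 2))) * φ (r ^ (k + 3) * u ^ 4) := by
          simp only [map_add, map_mul, map_pow]
          field_simp
          ring
      _ = _ := by rw [hq]; simp only [map_mul]; ring
  refine ⟨k, c * u ^ 2, derivative c * u ^ 2 - c * derivative (u ^ 2), ?_, ?_⟩
  · have ha : ¬ r ∣ a := fun h => hr.not_isUnit (y.isCoprime_num_denom.isUnit_of_dvd' h hry)
    rw [hr.prime.dvd_mul, not_or]
    exact ⟨not_dvd_pole_numerator hr ha hu k.succ_ne_zero, fun h => hu (hr.prime.dvd_of_dvd_pow h)⟩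
  · exact ⟨r ^ (k + 1) * q * u ^ 4 - p 0 * a * u ^ 3, by linear_combination key + p 2 * hd⟩

theorem dvd_coeff_two_of_dvd_denom [CharZero K] {p : ℕ → K[X]} {y : RatFunc K} {q r : K[X]}
    (hq : applyOp 2 p y = φ q) (hr : Irreducible r) (hry : r ∣ y.denom) : r ∣ p 2 := by
  obtain ⟨k, c, w, hc, hdvd⟩ := exists_leading_terms_of_dvd_denom hq hr hry
  have hlead : r ∣ p 2 * (((k + 2 : ℕ) : K[X]) * derivative r * c) := by
    have h :=
      dvd_sub (dvd_mul_right r (p 2 * w + p 1 * c)) ((dvd_pow_self r two_ne_zero).trans hdvd)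
    rwa [show r * (p 2 * w + p 1 * c) -
      (p 2 * (r * w - ((k + 2 : ℕ) : K[X]) * derivative r * c) + r * p 1 * c) =
        p 2 * (((k + 2 : ℕ) : K[X]) * derivative r * c) by ring] at h
  simpa only [hr.prime.dvd_mul, hr.not_dvd_natCast (Nat.succ_ne_zero _), hr.not_dvd_derivative,
    hc, or_false] using hlead

/-- `-(k + 1)` is a root of the indicial equation `s r' ρ (ρ - 1) + p 1 ρ ≡ 0 (mod r)`. -/
theorem exists_dvd_indicial_of_dvd_denom [CharZero K] {p : ℕ → K[X]} {y : RatFunc K}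
    {q r s : K[X]} (hq : applyOp 2 p y = φ q) (hr : Irreducible r) (hry : r ∣ y.denom)
    (hs : p 2 = r * s) : ∃ k : ℕ, r ∣ p 1 - ((k + 2 : ℕ) : K[X]) * s * derivative r := by
  obtain ⟨k, c, w, hc, hdvd⟩ := exists_leading_terms_of_dvd_denom hq hr hry
  have hlead : r ∣ r * (s * w) + c * (p 1 - ((k + 2 : ℕ) : K[X]) * s * derivative r) := by
    rw [hs, pow_two, show r * s * (r * w - ((k + 2 : ℕ) : K[X]) * derivative r * c) + r * p 1 * c =
      r * (r * (s * w) + c * (p 1 - ((k + 2 : ℕ) : K[X]) * s * derivative r)) by ring] at hdvd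
    exact (mul_dvd_mul_iff_left hr.ne_zero).mp hdvd
  rw [dvd_add_right (dvd_mul_right _ _), hr.prime.dvd_mul] at hlead
  exact ⟨k, hlead.resolve_left hc⟩

end

theorem MnpCoeff_two_eq {α : Knp} (hα : α ^ 2 = 1) : MnpCoeff 2 = (X - C α) * (X + C α) := by
  have hCα : C α ^ 2 = 1 := by rw [← C_pow, hα, C_1]
  show X ^ 2 - 1 = _
  linear_combination hCα

theorem X_sub_C_not_dvd_denom_of_MnpCoeff {y : RatFunc Knp} {q : Knp[X]}
    (hq : applyOp 2 MnpCoeff y = algebraMap Knp[X] (RatFunc Knp) q) {α : Knp} (hα : α ^ 2 = 1) :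
    ¬ X - C α ∣ y.denom := by
  intro hdvd
  obtain ⟨k, hk⟩ :=
    exists_dvd_indicial_of_dvd_denom hq (irreducible_X_sub_C α) hdvd (MnpCoeff_two_eq hα)
  rw [dvd_iff_isRoot, IsRoot] at hk
  simp only [MnpCoeff, map_mul, Nat.cast_add, Nat.cast_ofNat, derivative_sub, derivative_X,
    derivative_C, sub_zero, mul_one, eval_sub, eval_X, eval_mul, eval_C, eval_pow, hα, eval_one,
    sub_self, mul_zero, eval_add, eval_natCast, eval_ofNat] at hk
  have hα0 : α ≠ 0 := by rintro rfl; simp at hα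
  have hk' : α * ((2 * k + 3 : ℕ) : Knp) = 0 := by push_cast; linear_combination -hk
  exact mul_ne_zero hα0 (Nat.cast_ne_zero.mpr (by omega)) hk'

/-- if `y ∈ K(x)` is a rational function such that `M(y)` is a polynomial,
then `y` is itself a polynomial. -/
theorem Mnp_polynomial_preimage (y : RatFunc Knp)
    (h : ∃ q : Knp[X], applyOp 2 MnpCoeff y = algebraMap Knp[X] (RatFunc Knp) q) :
    ∃ q : Knp[X], y = algebraMap Knp[X] (RatFunc Knp) q := by
  obtain ⟨q, hq⟩ := h
  refine ⟨y.num, ?_⟩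
  suffices hden : y.denom = 1 by simpa [hden] using y.num_div_denom.symm
  by_contra hne
  obtain ⟨r, hr, hry⟩ := WfDvdMonoid.exists_irreducible_factor
    (mt y.monic_denom.eq_one_of_isUnit hne) y.denom_ne_zero
  obtain ⟨α, hα, hrα⟩ : ∃ α : Knp, α ^ 2 = 1 ∧ r ∣ X - C α := by
    have h2 := dvd_coeff_two_of_dvd_denom hq hr hry
    rw [MnpCoeff_two_eq (one_pow 2), hr.prime.dvd_mul, ← sub_neg_eq_add, ← C_neg] at h2
    rcases h2 with h1 | h1
    exacts [⟨1, one_pow 2, h1⟩, ⟨-1, neg_one_sq, h1⟩]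
  exact X_sub_C_not_dvd_denom_of_MnpCoeff hq hα
    ((hr.dvd_symm (irreducible_X_sub_C α) hrα).trans hry)
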